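/- Suppose ρ < 1, the invariant measure is normalized so that ∑_{n=0}^∞ π_n = 1, and π₀ = (1−ρ)(1−ν₀)/(λE[V]). Then lim_{N→∞} P_loss(N)/S̄_π(N) = 1 − ρ. -/

import Mathlib

/-! With the prescribed `π₀`, the numerator and the denominator of `P_loss(N)` are `(1 - ν₀) / λ`
times `(1 - ρ) S̄_π(N)` and `1 - ρ S̄_π(N)` respectively, so
`P_loss(N) / S̄_π(N) = (1 - ρ) / (1 - ρ S̄_π(N)) → 1 - ρ` as the tail `S̄_π(N)` tends to `0`.
The division is legitimate because no tail vanishes: `π₀ > 0` and every `b_N > 0` (already its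
term `ν_{N+1} a₀ / (1 - ν₀)` is positive), so the invariance equations give `π_N ≥ π₀ b_N > 0`. -/

open MeasureTheory Filter Set Topology Asymptotics
open scoped ENNReal

noncomputable section

/-- Laplace-transform value `F*(λ − λz) = ∫ e^{−(λ−λz)t} dF(t)` (Bochner integral). -/
def qLap (μ : Measure ℝ) (lam z : ℝ) : ℝ := ∫ t, Real.exp (-(lam - lam * z) * t) ∂μ

/-- Derivative value `F*'(λ − λz) = ∫ λ t e^{−(λ−λz)t} dF(t)`. -/
def qLapD (μ : Measure ℝ) (lam z : ℝ) : ℝ := ∫ t, lam * t * Real.exp (-(lam - lam * z) * t) ∂μ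

/-- Laplace-transform value as a lower integral in `ℝ≥0∞` (possibly `+∞`). -/
def qLapE (μ : Measure ℝ) (lam z : ℝ) : ℝ≥0∞ :=
  ∫⁻ t, ENNReal.ofReal (Real.exp (-(lam - lam * z) * t)) ∂μ

/-- `R` is the leftmost (real) singular point of `z ↦ F*(λ − λz)`:
`∫ e^{λ(r−1)t} dF(t)` converges for `1 ≤ r < R` and diverges for `r > R`. -/
def qAbscissa (μ : Measure ℝ) (lam R : ℝ) : Prop :=
  1 ≤ R ∧ (∀ r : ℝ, 1 ≤ r → r < R → Integrable (fun t => Real.exp (lam * (r - 1) * t)) μ) ∧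
    (∀ r : ℝ, R < r → ¬ Integrable (fun t => Real.exp (lam * (r - 1) * t)) μ)

/-- `a_j` (resp. `ν_j`): probability that `j` Poisson(λ) arrivals occur during a
time distributed according to `μ`. -/
def qCoef (μ : Measure ℝ) (lam : ℝ) (j : ℕ) : ℝ :=
  ∫ t, (lam * t) ^ j / (Nat.factorial j : ℝ) * Real.exp (-lam * t) ∂μ

/-- `b_j = ∑_{i=1}^{j+1} (ν_i / (1 − ν₀)) a_{j+1−i}`. -/
def qBcoef (μS μV : Measure ℝ) (lam : ℝ) (j : ℕ) : ℝ :=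
  ∑ i ∈ Finset.Icc 1 (j + 1), qCoef μV lam i / (1 - qCoef μV lam 0) * qCoef μS lam (j + 1 - i)

/-- A positive measurable function is slowly varying at `+∞`. -/
def SlowlyVaryingAtTop (L : ℝ → ℝ) : Prop :=
  Measurable L ∧ (∀ x : ℝ, 0 < x → 0 < L x) ∧
    ∀ t : ℝ, 0 < t → Tendsto (fun x => L (t * x) / L x) atTop (nhds 1)

section PoissonCoefficients

variable {μ : Measure ℝ} {lam : ℝ}

lemma ae_nonneg_of_measure_Iio_eq_zero (h : μ (Set.Iio 0) = 0) : ∀ᵐ t ∂μ, 0 ≤ t := by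
  rw [ae_iff]
  simp only [not_le]
  exact h

lemma integrable_poisson_weight [IsFiniteMeasure μ] (hsupp : μ (Set.Iio 0) = 0) (hlam : 0 ≤ lam)
    (j : ℕ) :
    Integrable (fun t => (lam * t) ^ j / (Nat.factorial j : ℝ) * Real.exp (-lam * t)) μ := by
  refine (integrable_const (1 : ℝ)).mono' (by fun_prop) ?_
  filter_upwards [ae_nonneg_of_measure_Iio_eq_zero hsupp] with t ht
  have hx : 0 ≤ lam * t := mul_nonneg hlam ht
  rw [Real.norm_of_nonneg (by positivity)]
  calc (lam * t) ^ j / (Nat.factorial j : ℝ) * Real.exp (-lam * t)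
      ≤ Real.exp (lam * t) * Real.exp (-lam * t) := by
        gcongr
        exact Real.pow_div_factorial_le_exp _ hx j
    _ = 1 := by rw [← Real.exp_add, neg_mul, add_neg_cancel, Real.exp_zero]

lemma qCoef_nonneg (hsupp : μ (Set.Iio 0) = 0) (hlam : 0 ≤ lam) (j : ℕ) : 0 ≤ qCoef μ lam j := by
  refine integral_nonneg_of_ae ?_
  filter_upwards [ae_nonneg_of_measure_Iio_eq_zero hsupp] with t ht
  have : 0 ≤ lam * t := mul_nonneg hlam ht
  positivity

lemma qCoef_pos [IsFiniteMeasure μ] (hsupp : μ (Set.Iio 0) = 0) (hpos : 0 < μ (Set.Ioi 0))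
    (hlam : 0 < lam) (j : ℕ) : 0 < qCoef μ lam j := by
  rw [qCoef, integral_pos_iff_support_of_nonneg_ae ?_ (integrable_poisson_weight hsupp hlam.le j)]
  · refine hpos.trans_le (measure_mono fun t (ht : 0 < t) => ?_)
    have : 0 < lam * t := mul_pos hlam ht
    exact Function.mem_support.2 (by positivity)
  · filter_upwards [ae_nonneg_of_measure_Iio_eq_zero hsupp] with t ht
    have : 0 ≤ lam * t := mul_nonneg hlam.le ht
    rw [Pi.zero_apply]
    positivity

lemma qCoef_zero_eq : qCoef μ lam 0 = ∫ t, Real.exp (-lam * t) ∂μ := by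
  simp [qCoef]

lemma qCoef_zero_pos [IsFiniteMeasure μ] [NeZero μ] (hsupp : μ (Set.Iio 0) = 0) (hlam : 0 ≤ lam) :
    0 < qCoef μ lam 0 := by
  rw [qCoef_zero_eq]
  exact integral_exp_pos (by simpa using integrable_poisson_weight hsupp hlam 0)

lemma qCoef_zero_lt_one [IsProbabilityMeasure μ] (hsupp : μ (Set.Iio 0) = 0)
    (hpos : 0 < μ (Set.Ioi 0)) (hlam : 0 < lam) : qCoef μ lam 0 < 1 := by
  have hint : Integrable (fun t => Real.exp (-lam * t)) μ := by
    simpa using integrable_poisson_weight hsupp hlam.le 0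
  have hgap : 0 < ∫ t, (1 - Real.exp (-lam * t)) ∂μ := by
    rw [integral_pos_iff_support_of_nonneg_ae ?_
      (show Integrable (fun t => 1 - Real.exp (-lam * t)) μ from (integrable_const 1).sub hint)]
    · refine hpos.trans_le (measure_mono fun t (ht : 0 < t) => ?_)
      have : Real.exp (-lam * t) < 1 := Real.exp_lt_one_iff.2 (by nlinarith)
      exact Function.mem_support.2 (by linarith)
    · filter_upwards [ae_nonneg_of_measure_Iio_eq_zero hsupp] with t ht
      exact sub_nonneg.2 (Real.exp_le_one_iff.2 (by nlinarith))
  rw [integral_sub (integrable_const 1) hint, integral_const, probReal_univ, smul_eq_mul,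
    mul_one] at hgap
  rw [qCoef_zero_eq]
  linarith

end PoissonCoefficients

lemma qBcoef_pos {μS μV : Measure ℝ} [IsFiniteMeasure μS] [NeZero μS]
    [IsProbabilityMeasure μV] (hSsupp : μS (Set.Iio 0) = 0) (hVsupp : μV (Set.Iio 0) = 0)
    (hVpos : 0 < μV (Set.Ioi 0))
    {lam : ℝ} (hlam : 0 < lam) (j : ℕ) : 0 < qBcoef μS μV lam j := by
  have hc : 0 < 1 - qCoef μV lam 0 := sub_pos.2 (qCoef_zero_lt_one hVsupp hVpos hlam)
  refine Finset.sum_pos' (fun i _ => ?_) ⟨j + 1, by simp, ?_⟩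
  · exact mul_nonneg (div_nonneg (qCoef_nonneg hVsupp hlam.le i) hc.le)
      (qCoef_nonneg hSsupp hlam.le _)
  · rw [Nat.sub_self]
    exact mul_pos (div_pos (qCoef_pos hVsupp hVpos hlam _) hc) (qCoef_zero_pos hSsupp hlam.le)

lemma mul_le_of_invariant {π a b : ℕ → ℝ} (hπ : ∀ n, 0 ≤ π n) (ha : ∀ n, 0 ≤ a n) {j : ℕ}
    (hj : π j = π 0 * b j + ∑ k ∈ Finset.Icc 1 (j + 1), π k * a (j + 1 - k)) :
    π 0 * b j ≤ π j := by
  rw [hj]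
  exact le_add_of_nonneg_right (Finset.sum_nonneg fun k _ => mul_nonneg (hπ k) (ha _))

lemma Summable.le_tsum_nat_add {f : ℕ → ℝ} (hf : Summable f) (hnn : ∀ n, 0 ≤ f n) (N : ℕ) :
    f N ≤ ∑' j, f (N + j) := by
  have hN : Summable fun j => f (N + j) := by
    simpa only [add_comm N] using (summable_nat_add_iff N).2 hf
  simpa using hN.le_tsum 0 fun j _ => hnn _

lemma HasSum.tsum_nat_add_eq_sub {f : ℕ → ℝ} {a : ℝ} (h : HasSum f a) (N : ℕ) :
    ∑' j, f (N + j) = a - ∑ j ∈ Finset.range N, f j := by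
  have hsplit := h.summable.sum_add_tsum_nat_add N
  rw [h.tsum_eq] at hsplit
  simp_rw [add_comm N]
  linarith

lemma tendsto_tsum_nat_add_zero (f : ℕ → ℝ) :
    Tendsto (fun N => ∑' j, f (N + j)) atTop (𝓝 0) := by
  simpa only [add_comm] using tendsto_sum_nat_add f

lemma loss_div_tail_eq {lam ES EV ν₀ ρ π₀ S T : ℝ} (hlam : lam ≠ 0) (hEV : EV ≠ 0)
    (hν₀ : ν₀ ≠ 1) (hT : T ≠ 0) (hρ : ρ = lam * ES)
    (hπ₀ : π₀ = (1 - ρ) * (1 - ν₀) / (lam * EV)) (hS : S = 1 - T) :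
    (EV * π₀ + (ES - lam⁻¹) * (1 - ν₀) * S) / (EV * π₀ + ES * (1 - ν₀) * S) / T =
      (1 - ρ) / (1 - ρ * T) := by
  have hc : (1 - ν₀) / lam ≠ 0 := div_ne_zero (sub_ne_zero.2 hν₀.symm) hlam
  have hnum : EV * π₀ + (ES - lam⁻¹) * (1 - ν₀) * S = (1 - ν₀) / lam * ((1 - ρ) * T) := by
    subst hρ hπ₀ hS
    field_simp
    ring
  have hden : EV * π₀ + ES * (1 - ν₀) * S = (1 - ν₀) / lam * (1 - ρ * T) := by
    subst hρ hπ₀ hS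
    field_simp
    ring
  rw [hnum, hden, mul_div_mul_left _ _ hc, div_div, mul_div_mul_right _ _ hT]

theorem stmt0_general
    (μS μV : Measure ℝ) [IsProbabilityMeasure μS] [IsProbabilityMeasure μV]
    (hSsupp : μS (Set.Iio 0) = 0) (hVsupp : μV (Set.Iio 0) = 0)
    (lam : ℝ) (hlam : 0 < lam)
    (ES EV : ℝ)
    (hEVpos : 0 < EV) (hVpos : 0 < μV (Set.Ioi 0))
    (ρ : ℝ) (hρdef : ρ = lam * ES)
    (π : ℕ → ℝ) (hπnn : ∀ n, 0 ≤ π n)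
    (hinv : ∀ j : ℕ, π j = π 0 * qBcoef μS μV lam j +
      ∑ k ∈ Finset.Icc 1 (j + 1), π k * qCoef μS lam (j + 1 - k))
    (Ploss : ℕ → ℝ)
    (hPloss : ∀ N : ℕ, Ploss N =
      (EV * π 0 + (ES - lam⁻¹) * (1 - qCoef μV lam 0) * (∑ j ∈ Finset.range N, π j)) /
      (EV * π 0 + ES * (1 - qCoef μV lam 0) * (∑ j ∈ Finset.range N, π j)))
    (hρ1 : ρ < 1) (hsum : HasSum π 1)
    (hπ0 : π 0 = (1 - ρ) * (1 - qCoef μV lam 0) / (lam * EV)) :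
    Tendsto (fun N : ℕ => Ploss N / (∑' j : ℕ, π (N + j))) atTop (𝓝 (1 - ρ)) := by
  have hν₀ : 0 < 1 - qCoef μV lam 0 := sub_pos.2 (qCoef_zero_lt_one hVsupp hVpos hlam)
  have hπ0_pos : 0 < π 0 := by
    rw [hπ0]
    have : 0 < 1 - ρ := sub_pos.2 hρ1
    positivity
  have htail_pos : ∀ N, 0 < ∑' j, π (N + j) := fun N =>
    calc 0 < π 0 * qBcoef μS μV lam N := mul_pos hπ0_pos (qBcoef_pos hSsupp hVsupp hVpos hlam N)
      _ ≤ π N := mul_le_of_invariant hπnn (qCoef_nonneg hSsupp hlam.le) (hinv N)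
      _ ≤ ∑' j, π (N + j) := hsum.summable.le_tsum_nat_add hπnn N
  have hratio : ∀ N, Ploss N / ∑' j, π (N + j) = (1 - ρ) / (1 - ρ * ∑' j, π (N + j)) :=
    fun N => hPloss N ▸ loss_div_tail_eq hlam.ne' hEVpos.ne' (sub_pos.1 hν₀).ne
      (htail_pos N).ne' hρdef hπ0 (by rw [hsum.tsum_nat_add_eq_sub]; ring)
  have hlim : Tendsto (fun N => (1 - ρ) / (1 - ρ * ∑' j, π (N + j))) atTop
      (𝓝 ((1 - ρ) / (1 - ρ * 0))) :=
    tendsto_const_nhds.div (tendsto_const_nhds.sub ((tendsto_tsum_nat_add_zero π).const_mul ρ))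
      (by simp)
  rw [mul_zero, sub_zero, div_one] at hlim
  exact hlim.congr fun N => (hratio N).symm

theorem stmt0
    (μS μV : Measure ℝ) [IsProbabilityMeasure μS] [IsProbabilityMeasure μV]
    (hSsupp : μS (Set.Iio 0) = 0) (hVsupp : μV (Set.Iio 0) = 0)
    (lam : ℝ) (hlam : 0 < lam)
    (hSint : Integrable (fun t => t) μS) (hVint : Integrable (fun t => t) μV)
    (ES EV : ℝ) (hES : ES = ∫ t, t ∂μS) (hEV : EV = ∫ t, t ∂μV)
    (hESpos : 0 < ES) (hEVpos : 0 < EV) (hVpos : 0 < μV (Set.Ioi 0))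
    (ρ : ℝ) (hρdef : ρ = lam * ES)
    (π : ℕ → ℝ) (hπnn : ∀ n, 0 ≤ π n) (hπne : π ≠ 0)
    (hinv : ∀ j : ℕ, π j = π 0 * qBcoef μS μV lam j +
      ∑ k ∈ Finset.Icc 1 (j + 1), π k * qCoef μS lam (j + 1 - k))
    (Ploss : ℕ → ℝ)
    (hPloss : ∀ N : ℕ, Ploss N =
      (EV * π 0 + (ES - lam⁻¹) * (1 - qCoef μV lam 0) * (∑ j ∈ Finset.range N, π j)) /
      (EV * π 0 + ES * (1 - qCoef μV lam 0) * (∑ j ∈ Finset.range N, π j)))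
    (hρ1 : ρ < 1) (hsum : HasSum π 1)
    (hπ0 : π 0 = (1 - ρ) * (1 - qCoef μV lam 0) / (lam * EV)) :
    Tendsto (fun N : ℕ => Ploss N / (∑' j : ℕ, π (N + j))) atTop (𝓝 (1 - ρ)) :=
  stmt0_general μS μV hSsupp hVsupp lam hlam ES EV hEVpos hVpos ρ hρdef π hπnn hinv Ploss hPloss hρ1
    hsum hπ0
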